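/- arXiv:1505.06810 — 2 statements merged into one kernel-verified Lean document; each statement's English description precedes it below -/
import Mathlib

section
/- The set of pairs (A, B) ∈ ℝ^{n×n} × ℝ^{n×m} for which the controllability matrix (B, AB, ..., A^{n-1}B) has full row rank n is an open and dense subset of ℝ^{n×n} × ℝ^{n×m} (with m ≥ 1). -/
def ctrlMat {n m : ℕ} (A : Matrix (Fin n) (Fin n) ℝ) (B : Matrix (Fin n) (Fin m) ℝ) :
    Matrix (Fin n) (Fin n × Fin m) ℝ :=
  fun i p => (A ^ (p.1 : ℕ) * B) i p.2

/-!
Over `ℝ`, the controllability matrix `C` has full row rank iff `det (C Cᵀ) ≠ 0`, and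
`det (C Cᵀ)` is a continuous function of `(A, B)`: this gives openness. On the segment from any
pair `p` to a pair `q` with `det (C Cᵀ) ≠ 0`, this determinant is a nonzero polynomial in the
parameter, so it vanishes only finitely often, and `p` is a limit of pairs on the segment where it
does not vanish. Such a `q` is `A = diag (0, 1, …, n - 1)` with every entry of `B` equal to `1`:
the first columns of the blocks `AᵏB` form a Vandermonde matrix.
-/

open Matrix Polynomial

theorem Matrix.rank_eq_card_iff_det_ne_zero {n K : Type*} [Fintype n] [DecidableEq n] [Field K]
    (A : Matrix n n K) : A.rank = Fintype.card n ↔ A.det ≠ 0 := by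
  refine ⟨fun h => ?_, rank_of_det_ne_zero⟩
  have hrange : LinearMap.range A.mulVecLin = ⊤ :=
    Submodule.eq_top_of_finrank_eq (by rw [← Matrix.rank, h, Module.finrank_fintype_fun_eq_card])
  have hsurj : Function.Surjective A.mulVec := LinearMap.range_eq_top.1 hrange
  exact ((isUnit_iff_isUnit_det A).1 (mulVec_surjective_iff_isUnit.1 hsurj)).ne_zero

theorem Polynomial.mem_closure_setOf_ne_zero_of_eval_eq {E : Type*} [AddCommGroup E] [Module ℝ E]
    [TopologicalSpace E] [ContinuousAdd E] [ContinuousSMul ℝ E] {f : E → ℝ} {p q : E}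
    (g : ℝ[X]) (hg : ∀ t : ℝ, g.eval t = f (p + t • (q - p))) (hq : f q ≠ 0) :
    p ∈ closure {x | f x ≠ 0} := by
  have hg0 : g ≠ 0 := by
    rintro rfl
    exact hq (by simpa using (hg 1).symm)
  have hdense : Dense {t : ℝ | g.IsRoot t}ᶜ :=
    (finite_setOfPred_isRoot hg0).countable.dense_compl ℝ
  have hline : Continuous fun t : ℝ => p + t • (q - p) := by fun_prop
  have hmaps : Set.MapsTo (fun t : ℝ => p + t • (q - p)) {t | g.IsRoot t}ᶜ {x | f x ≠ 0} :=
    fun t ht => by simpa [hg] using ht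
  simpa using map_mem_closure hline (hdense 0) hmaps

section Controllability

variable {R : Type*} [CommRing R] {n m : ℕ}

/-- `ctrlMat` over an arbitrary commutative ring, so that it can be taken over `ℝ[X]`. -/
def controllabilityMatrix (A : Matrix (Fin n) (Fin n) R) (B : Matrix (Fin n) (Fin m) R) :
    Matrix (Fin n) (Fin n × Fin m) R :=
  fun i p => (A ^ (p.1 : ℕ) * B) i p.2

def controllabilityGramDet (A : Matrix (Fin n) (Fin n) R) (B : Matrix (Fin n) (Fin m) R) : R :=
  (controllabilityMatrix A B * (controllabilityMatrix A B)ᵀ).det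

theorem controllabilityMatrix_map {S : Type*} [CommRing S] (f : R →+* S)
    (A : Matrix (Fin n) (Fin n) R) (B : Matrix (Fin n) (Fin m) R) :
    (controllabilityMatrix A B).map f = controllabilityMatrix (A.map f) (B.map f) := by
  ext i p
  simp [controllabilityMatrix, ← Matrix.map_pow, ← Matrix.map_mul]

theorem map_controllabilityGramDet {S : Type*} [CommRing S] (f : R →+* S)
    (A : Matrix (Fin n) (Fin n) R) (B : Matrix (Fin n) (Fin m) R) :
    f (controllabilityGramDet A B) = controllabilityGramDet (A.map f) (B.map f) := by
  rw [controllabilityGramDet, f.map_det, RingHom.mapMatrix_apply, Matrix.map_mul,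
    transpose_map, controllabilityMatrix_map, controllabilityGramDet]

theorem continuous_controllabilityGramDet [TopologicalSpace R] [IsTopologicalRing R] :
    Continuous fun p : Matrix (Fin n) (Fin n) R × Matrix (Fin n) (Fin m) R =>
      controllabilityGramDet p.1 p.2 := by
  have hC : Continuous fun p : Matrix (Fin n) (Fin n) R × Matrix (Fin n) (Fin m) R =>
      controllabilityMatrix p.1 p.2 :=
    continuous_matrix fun i q =>
      ((continuous_fst.pow (q.1 : ℕ)).matrix_mul continuous_snd).matrix_elem i q.2
  exact (hC.matrix_mul hC.matrix_transpose).matrix_det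

theorem exists_eval_eq_controllabilityGramDet_segment
    (p q : Matrix (Fin n) (Fin n) R × Matrix (Fin n) (Fin m) R) :
    ∃ g : R[X], ∀ t : R, g.eval t =
      controllabilityGramDet (p + t • (q - p)).1 (p + t • (q - p)).2 := by
  refine ⟨controllabilityGramDet (p.1.map C + (X : R[X]) • (q.1 - p.1).map C)
    (p.2.map C + (X : R[X]) • (q.2 - p.2).map C), fun t => ?_⟩
  rw [← coe_evalRingHom, map_controllabilityGramDet]
  congr <;> ext <;> simp

theorem rank_controllabilityMatrix_diagonal {K : Type*} [Field K] {v : Fin n → K}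
    (hv : Function.Injective v) (j : Fin m) :
    (controllabilityMatrix (diagonal v) (of fun _ _ => 1 : Matrix (Fin n) (Fin m) K)).rank =
      n := by
  have hsub : (controllabilityMatrix (diagonal v)
      (of fun _ _ => 1 : Matrix (Fin n) (Fin m) K)).submatrix id (fun k => (k, j)) =
        vandermonde v := by
    ext i k
    simp [controllabilityMatrix, diagonal_pow, vandermonde_apply]
  refine le_antisymm ((rank_le_card_height _).trans_eq (Fintype.card_fin n)) ?_
  calc n = (vandermonde v).rank := by
        rw [rank_of_det_ne_zero (det_vandermonde_ne_zero_iff.2 hv), Fintype.card_fin]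
    _ ≤ _ := hsub ▸ rank_submatrix_le _ _ _

end Controllability

theorem ctrlMat_eq_controllabilityMatrix {n m : ℕ} (A : Matrix (Fin n) (Fin n) ℝ)
    (B : Matrix (Fin n) (Fin m) ℝ) : ctrlMat A B = controllabilityMatrix A B :=
  rfl

theorem rank_ctrlMat_eq_iff_controllabilityGramDet_ne_zero {n m : ℕ}
    (A : Matrix (Fin n) (Fin n) ℝ) (B : Matrix (Fin n) (Fin m) ℝ) :
    (ctrlMat A B).rank = n ↔ controllabilityGramDet A B ≠ 0 := by
  rw [controllabilityGramDet, ← rank_eq_card_iff_det_ne_zero, rank_self_mul_transpose,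
    Fintype.card_fin, ctrlMat_eq_controllabilityMatrix]

/-- The set of reachable pairs `(A, B)` is open and dense in the parameter space. -/
theorem reachable_pairs_open_dense {n m : ℕ} (hm : 1 ≤ m) :
    IsOpen {p : Matrix (Fin n) (Fin n) ℝ × Matrix (Fin n) (Fin m) ℝ |
        (ctrlMat p.1 p.2).rank = n} ∧
    Dense {p : Matrix (Fin n) (Fin n) ℝ × Matrix (Fin n) (Fin m) ℝ |
        (ctrlMat p.1 p.2).rank = n} := by
  have hset : {p : Matrix (Fin n) (Fin n) ℝ × Matrix (Fin n) (Fin m) ℝ |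
      (ctrlMat p.1 p.2).rank = n} = {p | controllabilityGramDet p.1 p.2 ≠ 0} :=
    Set.ext fun p => rank_ctrlMat_eq_iff_controllabilityGramDet_ne_zero p.1 p.2
  rw [hset]
  refine ⟨isOpen_ne_fun continuous_controllabilityGramDet continuous_const, fun p => ?_⟩
  let q : Matrix (Fin n) (Fin n) ℝ × Matrix (Fin n) (Fin m) ℝ :=
    (diagonal fun i => (i : ℝ), of fun _ _ => 1)
  have hq : controllabilityGramDet q.1 q.2 ≠ 0 :=
    (rank_ctrlMat_eq_iff_controllabilityGramDet_ne_zero q.1 q.2).1 <|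
      rank_controllabilityMatrix_diagonal (Nat.cast_injective.comp Fin.val_injective) ⟨0, hm⟩
  obtain ⟨g, hg⟩ := exists_eval_eq_controllabilityGramDet_segment p q
  exact g.mem_closure_setOf_ne_zero_of_eval_eq hg hq
end

section
/- Let A ∈ ℝ^{n×n} and B ∈ ℝ^{n×m}. The pair (A, B) is not reachable if and only if there exists a nonzero vector w ∈ ℂⁿ and λ ∈ ℂ with wᵀA = λwᵀ and wᵀB = 0 (PBH test via left eigenvectors). -/
open Matrix

section Aux

variable {n m : ℕ} {p : Type*} [Fintype p]

/-- rank of a matrix is not full (row) rank iff there is a nonzero left null vector. -/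
lemma rank_ne_iff_exists_left_null {K : Type*} [Field K] (M : Matrix (Fin n) p K) :
    M.rank ≠ n ↔ ∃ v : Fin n → K, v ≠ 0 ∧ Matrix.vecMul v M = 0 := by
  have ht : M.rank = Mᵀ.rank := (Matrix.rank_transpose M).symm
  have hrn := LinearMap.finrank_range_add_finrank_ker (Mᵀ.mulVecLin)
  rw [Module.finrank_fin_fun] at hrn
  have hker : Mᵀ.rank ≠ n ↔ LinearMap.ker Mᵀ.mulVecLin ≠ ⊥ := by
    rw [Matrix.rank]
    constructor
    · intro h hbot
      rw [hbot] at hrn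
      simp at hrn
      omega
    · intro h hEq
      apply h
      rw [hEq] at hrn
      have : Module.finrank K ↥(LinearMap.ker Mᵀ.mulVecLin) = 0 := by omega
      exact Submodule.finrank_eq_zero.mp this
  rw [ht, hker, Submodule.ne_bot_iff]
  constructor
  · rintro ⟨v, hv, hv0⟩
    refine ⟨v, hv0, ?_⟩
    rw [LinearMap.mem_ker, Matrix.mulVecLin_apply, Matrix.mulVec_transpose] at hv
    exact hv
  · rintro ⟨v, hv0, hv⟩
    exact ⟨v, by rw [LinearMap.mem_ker, Matrix.mulVecLin_apply, Matrix.mulVec_transpose]; exact hv, hv0⟩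

/-- A real matrix has a nonzero real left null vector iff its complexification has a
nonzero complex left null vector. -/
lemma exists_left_null_complex_iff (M : Matrix (Fin n) p ℝ) :
    (∃ v : Fin n → ℝ, v ≠ 0 ∧ Matrix.vecMul v M = 0) ↔
      ∃ w : Fin n → ℂ, w ≠ 0 ∧ Matrix.vecMul w (M.map (Complex.ofReal)) = 0 := by
  constructor
  · rintro ⟨v, hv0, hv⟩
    refine ⟨fun i => (v i : ℂ), ?_, ?_⟩
    · intro h
      apply hv0
      funext i
      have := congrFun h i
      simpa using this
    · funext j
      have := congrFun hv j
      simp only [Matrix.vecMul, dotProduct, Matrix.map_apply, Pi.zero_apply] at this ⊢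
      have : ((∑ i, v i * M i j : ℝ) : ℂ) = 0 := by rw [this]; simp
      rw [← this]
      push_cast
      rfl
  · rintro ⟨w, hw0, hw⟩
    have hre : Matrix.vecMul (fun i => (w i).re) M = 0 := by
      funext j
      have := congrFun hw j
      simp only [Matrix.vecMul, dotProduct, Matrix.map_apply, Pi.zero_apply] at this ⊢
      have h2 := congrArg Complex.re this
      simpa [Complex.re_sum] using h2
    have him : Matrix.vecMul (fun i => (w i).im) M = 0 := by
      funext j
      have := congrFun hw j
      simp only [Matrix.vecMul, dotProduct, Matrix.map_apply, Pi.zero_apply] at this ⊢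
      have h2 := congrArg Complex.im this
      simpa [Complex.im_sum] using h2
    by_cases hR : (fun i => (w i).re) = (0 : Fin n → ℝ)
    · refine ⟨fun i => (w i).im, ?_, him⟩
      intro h
      apply hw0
      funext i
      have h1 := congrFun hR i
      have h2 := congrFun h i
      simp only [Pi.zero_apply] at h1 h2
      exact Complex.ext h1 h2
    · exact ⟨fun i => (w i).re, hR, hre⟩

lemma vecMul_finset_sum {K : Type*} [CommRing K] {ι : Type*} (s : Finset ι)
    (v : Fin n → K) (f : ι → Matrix (Fin n) p K) :
    Matrix.vecMul v (∑ i ∈ s, f i) = ∑ i ∈ s, Matrix.vecMul v (f i) := by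
  induction s using Finset.cons_induction with
  | empty => simp [Matrix.vecMul_zero]
  | cons a s ha ih => simp [Finset.sum_cons, Matrix.vecMul_add, ih]

lemma vecMul_smul_matrix {K : Type*} [CommRing K] (c : K)
    (v : Fin n → K) (M : Matrix (Fin n) p K) :
    Matrix.vecMul v (c • M) = c • Matrix.vecMul v M := by
  funext j
  simp only [Matrix.vecMul, dotProduct, Matrix.smul_apply, Pi.smul_apply, smul_eq_mul,
    Finset.mul_sum]
  apply Finset.sum_congr rfl
  intro i _
  ring

lemma map_pow_mul (A : Matrix (Fin n) (Fin n) ℝ) (B : Matrix (Fin n) (Fin m) ℝ) (k : ℕ) :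
    (A ^ k * B).map (Complex.ofReal) =
      (A.map Complex.ofReal) ^ k * (B.map Complex.ofReal) := by
  have hmap : ∀ {a b : ℕ} (M : Matrix (Fin a) (Fin b) ℝ),
      M.map Complex.ofReal = M.map Complex.ofRealHom := by
    intro a b M; rfl
  rw [hmap, hmap, hmap]
  rw [Matrix.map_mul]
  congr 1
  induction k with
  | zero => simp
  | succ k ih => rw [pow_succ, pow_succ, Matrix.map_mul, ih]

end Aux

/-- PBH test: `(A, B)` is not reachable iff `A` has a (complex) left eigenvector `w`
with `wᵀ B = 0`. -/
theorem pbh_test {n m : ℕ}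
    (A : Matrix (Fin n) (Fin n) ℝ) (B : Matrix (Fin n) (Fin m) ℝ) :
    (ctrlMat A B).rank ≠ n ↔
      ∃ (w : Fin n → ℂ) (lam : ℂ), w ≠ 0 ∧
        Matrix.vecMul w (A.map (Complex.ofReal)) = lam • w ∧
        Matrix.vecMul w (B.map (Complex.ofReal)) = 0 := by
  set Ac : Matrix (Fin n) (Fin n) ℂ := A.map Complex.ofReal with hAc
  set Bc : Matrix (Fin n) (Fin m) ℂ := B.map Complex.ofReal with hBc
  -- entrywise description of vecMul against the complexified controllability matrix
  have hentry : ∀ (v : Fin n → ℂ) (k : Fin n) (j : Fin m),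
      Matrix.vecMul v ((ctrlMat A B).map Complex.ofReal) (k, j)
        = Matrix.vecMul v (Ac ^ (k : ℕ) * Bc) j := by
    intro v k j
    have h := map_pow_mul A B (k : ℕ)
    simp only [Matrix.vecMul, dotProduct, Matrix.map_apply, ctrlMat]
    congr 1
    funext i
    have := congrFun (congrFun h i) j
    simp only [Matrix.map_apply] at this
    rw [this]
  rw [rank_ne_iff_exists_left_null, exists_left_null_complex_iff]
  constructor
  · rintro ⟨v, hv0, hv⟩
    -- v annihilates A^k B for all k < n; extend to all k by Cayley–Hamilton
    have hlow : ∀ k : ℕ, k < n → Matrix.vecMul v (Ac ^ k * Bc) = 0 := by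
      intro k hk
      funext j
      have := congrFun hv (⟨k, hk⟩, j)
      rw [← hentry v ⟨k, hk⟩ j]
      exact this
    have hall : ∀ k : ℕ, Matrix.vecMul v (Ac ^ k * Bc) = 0 := by
      intro k
      induction k using Nat.strong_induction_on with
      | _ k ih =>
        by_cases hk : k < n
        · exact hlow k hk
        · push_neg at hk
          obtain ⟨j, rfl⟩ : ∃ j, k = n + j := ⟨k - n, by omega⟩
          -- Cayley–Hamilton
          have hmonic := Ac.charpoly_monic
          have hdeg : Ac.charpoly.natDegree = n := by
            rw [Matrix.charpoly_natDegree_eq_dim, Fintype.card_fin]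
          have hCH := Matrix.aeval_self_charpoly Ac
          rw [Polynomial.aeval_eq_sum_range, hdeg, Finset.sum_range_succ] at hCH
          have hlead : Ac.charpoly.coeff n = 1 := by
            have := hmonic.leadingCoeff
            rwa [Polynomial.leadingCoeff, hdeg] at this
          rw [hlead, one_smul] at hCH
          have hAn : Ac ^ n = -∑ i ∈ Finset.range n, Ac.charpoly.coeff i • Ac ^ i :=
            eq_neg_of_add_eq_zero_right hCH
          have hsplit : Ac ^ (n + j) * Bc
              = -∑ i ∈ Finset.range n, Ac.charpoly.coeff i • (Ac ^ (i + j) * Bc) := by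
            rw [pow_add, hAn, Matrix.neg_mul, Matrix.neg_mul, neg_inj,
              Matrix.sum_mul, Matrix.sum_mul]
            apply Finset.sum_congr rfl
            intro i _
            rw [Matrix.smul_mul, Matrix.smul_mul, pow_add, Matrix.mul_assoc]
          rw [hsplit, Matrix.vecMul_neg, vecMul_finset_sum]
          have hzero : ∀ i ∈ Finset.range n,
              Matrix.vecMul v (Ac.charpoly.coeff i • (Ac ^ (i + j) * Bc)) = 0 := by
            intro i hi
            rw [vecMul_smul_matrix, ih (i + j) (by simp at hi; omega), smul_zero]
          rw [Finset.sum_congr rfl hzero]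
          simp
    -- the subspace of vectors annihilating all `A^k B` is nontrivial and invariant
    let W : Submodule ℂ (Fin n → ℂ) :=
      { carrier := {x | ∀ k : ℕ, Matrix.vecMul x (Ac ^ k * Bc) = 0}
        add_mem' := by
          intro a b ha hb k
          rw [Matrix.add_vecMul, ha k, hb k, add_zero]
        zero_mem' := by
          intro k
          rw [Matrix.zero_vecMul]
        smul_mem' := by
          intro c a ha k
          rw [Matrix.smul_vecMul, ha k, smul_zero] }
    have hvW : v ∈ W := hall
    haveI hW : Nontrivial W := Submodule.nontrivial_iff_ne_bot.mpr (by
      intro hbot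
      apply hv0
      have hvbot : v ∈ (⊥ : Submodule ℂ (Fin n → ℂ)) := hbot ▸ hvW
      simpa using hvbot)
    have hinv : ∀ x ∈ W, Ac.vecMulLinear x ∈ W := by
      intro x hx k
      show Matrix.vecMul (Ac.vecMulLinear x) (Ac ^ k * Bc) = 0
      rw [Matrix.vecMulLinear_apply, Matrix.vecMul_vecMul, ← Matrix.mul_assoc, ← pow_succ']
      exact hx (k + 1)
    obtain ⟨μ, hμ⟩ := Module.End.exists_eigenvalue ((Ac.vecMulLinear).restrict hinv)
    obtain ⟨x, hx⟩ := hμ.exists_hasEigenvector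
    refine ⟨(x : Fin n → ℂ), μ, ?_, ?_, ?_⟩
    · intro h
      exact hx.2 (Submodule.coe_eq_zero.mp h)
    · have h1 : (Ac.vecMulLinear).restrict hinv x = μ • x :=
        Module.End.mem_eigenspace_iff.mp hx.1
      have h2 := congrArg (Subtype.val) h1
      rw [LinearMap.restrict_coe_apply] at h2
      simpa [Matrix.vecMulLinear_apply] using h2
    · have h0 : Matrix.vecMul (x : Fin n → ℂ) (Ac ^ 0 * Bc) = 0 := x.2 0
      simpa using h0
  · rintro ⟨w, lam, hw0, hwA, hwB⟩
    refine ⟨w, hw0, ?_⟩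
    have hk : ∀ k : ℕ, Matrix.vecMul w (Ac ^ k * Bc) = 0 := by
      intro k
      induction k with
      | zero => simpa using hwB
      | succ k ih =>
        have : Ac ^ (k + 1) * Bc = Ac * (Ac ^ k * Bc) := by
          rw [pow_succ', Matrix.mul_assoc]
        rw [this, ← Matrix.vecMul_vecMul, hwA, Matrix.smul_vecMul, ih, smul_zero]
    funext p
    obtain ⟨k, j⟩ := p
    rw [hentry w k j]
    exact congrFun (hk k) j
end
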